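/- Let G = (V, E) be a finite simple undirected graph with edge colors and integer color bounds w_j ≥ 1, and let x : E → (0, 1] satisfy Σ_{e∈δ(v)} x_e ≤ 1 for all v ∈ V. Suppose there exist: a set F ⊆ V with Σ_{e∈δ(v)} x_e = 1 for all v ∈ F; a laminar family 𝓛 of odd-cardinality subsets S ⊆ V with |S| ≥ 3 and Σ_{e∈E(S)} x_e = (|S| − 1)/2 for all S ∈ 𝓛; and a set Q of colors with Σ_{e∈E_j} x_e = w_j for all j ∈ Q; such that |E| = |F| + |𝓛| + |Q|. Then |E| ≤ 4 · Σ_{e∈E} x_e. -/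

import Mathlib

/-!
The three parts of `|E| = |F| + |𝓛| + |Q|` are charged to `x(E)`. Summing the tight degree
constraints counts every edge twice, so `|F| ≤ 2 x(E)`; the tight colour classes are disjoint
and `w_j ≥ 1`, so `|Q| ≤ x(E)`. For the laminar family, `|𝓛| ≤ ∑ (|T| - 1) / 2` over its
maximal members `T`, and these are disjoint, so the sum is `∑ x(E(T)) ≤ x(E)`. That count is
proved by induction, adding a member `T` of largest size: the maximal members `R` already
inside `T` are odd, disjoint and proper, whence `∑ |R| + 3 ≤ |T| + #{R}`.
-/

/-- A family of finite sets is laminar if any two members are nested or disjoint. -/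
def Laminar {α : Type*} (𝓛 : Finset (Finset α)) : Prop :=
  ∀ S ∈ 𝓛, ∀ T ∈ 𝓛, S ⊆ T ∨ T ⊆ S ∨ Disjoint S T

open Finset

theorem Laminar.mono {α : Type*} {𝓛 𝓛' : Finset (Finset α)} (hl : Laminar 𝓛) (h : 𝓛' ⊆ 𝓛) :
    Laminar 𝓛' :=
  fun S hS T hT => hl S (h hS) T (h hT)

section MaximalSets

variable {α : Type*} [DecidableEq α]

def maximalSets (𝓛 : Finset (Finset α)) : Finset (Finset α) :=
  𝓛.filter fun T => ∀ S ∈ 𝓛, T ⊆ S → S = T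

theorem maximalSets_subset (𝓛 : Finset (Finset α)) : maximalSets 𝓛 ⊆ 𝓛 :=
  filter_subset _ _

theorem Laminar.pairwiseDisjoint_maximalSets {𝓛 : Finset (Finset α)} (hl : Laminar 𝓛) :
    (maximalSets 𝓛 : Set (Finset α)).PairwiseDisjoint id := by
  intro S hS T hT hne
  simp only [mem_coe, maximalSets, mem_filter] at hS hT
  rcases hl S hS.1 T hT.1 with hST | hTS | hdisj
  · exact absurd (hS.2 T hT.1 hST).symm hne
  · exact absurd (hT.2 S hS.1 hTS) hne
  · exact hdisj

theorem maximalSets_insert_of_forall_card_le {T : Finset α} {𝓛 : Finset (Finset α)}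
    (hT : ∀ S ∈ 𝓛, S.card ≤ T.card) :
    maximalSets (insert T 𝓛) = insert T ((maximalSets 𝓛).filter (¬ · ⊆ T)) := by
  ext S
  simp only [maximalSets, mem_filter, mem_insert, forall_eq_or_imp]
  constructor
  · rintro ⟨rfl | hS, hST, hSmax⟩
    · exact Or.inl rfl
    · by_cases h : S = T
      · exact Or.inl h
      · exact Or.inr ⟨⟨hS, hSmax⟩, fun hsub => h (hST hsub).symm⟩
  · rintro (rfl | ⟨⟨hS, hSmax⟩, hST⟩)
    · refine ⟨Or.inl rfl, fun _ => rfl, fun R hR hsub => ?_⟩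
      exact (eq_of_subset_of_card_le hsub (hT R hR)).symm
    · exact ⟨Or.inr hS, fun hsub => absurd hsub hST,
        fun R hR hsub => hSmax R hR hsub⟩

end MaximalSets

theorem even_sum_card_add_card {ι : Type*} {s : Finset ι} {f : ι → ℕ} (hf : ∀ i ∈ s, Odd (f i)) :
    Even (∑ i ∈ s, f i + s.card) := by
  rw [Nat.even_add, even_sum_iff_even_card_odd, filter_true_of_mem hf]

/- For `#𝓒 = 1` because `|R| ≤ |T| - 2` (both are odd), for `#𝓒 ≥ 2` because `∑ |R| ≤ |T|`
and both sides have the same parity. -/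
theorem sum_card_add_three_le_card_add_card {α : Type*} {𝓒 : Finset (Finset α)} {T : Finset α}
    (hdisj : (𝓒 : Set (Finset α)).PairwiseDisjoint id) (hsub : ∀ R ∈ 𝓒, R ⊂ T)
    (hodd : ∀ R ∈ 𝓒, Odd R.card) (hT : Odd T.card) (hT3 : 3 ≤ T.card) :
    ∑ R ∈ 𝓒, R.card + 3 ≤ T.card + 𝓒.card := by
  classical
  have hsum_le : ∑ R ∈ 𝓒, R.card ≤ T.card :=
    calc ∑ R ∈ 𝓒, R.card = (𝓒.biUnion id).card := (card_biUnion hdisj).symm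
      _ ≤ T.card := card_le_card (biUnion_subset.2 fun R hR => (hsub R hR).subset)
  obtain ⟨u, hu⟩ := even_sum_card_add_card hodd
  obtain ⟨t, ht⟩ := hT
  obtain hm | hm | hm : 𝓒.card = 0 ∨ 𝓒.card = 1 ∨ 2 ≤ 𝓒.card := by omega
  · rw [card_eq_zero.mp hm]
    simpa using hT3
  · obtain ⟨R, rfl⟩ := card_eq_one.mp hm
    have hlt := card_lt_card (hsub R (mem_singleton_self R))
    obtain ⟨r, hr⟩ := hodd R (mem_singleton_self R)
    rw [sum_singleton, card_singleton]
    omega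
  · omega

theorem Laminar.two_mul_card_add_card_maximalSets_le {α : Type*} [DecidableEq α]
    {𝓛 : Finset (Finset α)} (hl : Laminar 𝓛) (hodd : ∀ S ∈ 𝓛, Odd S.card)
    (hthree : ∀ S ∈ 𝓛, 3 ≤ S.card) :
    2 * 𝓛.card + (maximalSets 𝓛).card ≤ ∑ T ∈ maximalSets 𝓛, T.card := by
  revert hl hodd hthree
  refine Finset.induction_on_max_value card 𝓛 (by simp [maximalSets]) ?_
  intro T 𝓛 hT𝓛 hTmax ih hl hodd hthree
  specialize ih (hl.mono (subset_insert T 𝓛)) (fun S hS => hodd S (mem_insert_of_mem hS))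
    (fun S hS => hthree S (mem_insert_of_mem hS))
  have hchildren : ∑ R ∈ (maximalSets 𝓛).filter (· ⊆ T), R.card + 3
      ≤ T.card + ((maximalSets 𝓛).filter (· ⊆ T)).card := by
    refine sum_card_add_three_le_card_add_card
      (((hl.mono (subset_insert T 𝓛)).pairwiseDisjoint_maximalSets).subset
        (coe_subset.2 (filter_subset _ _)))
      (fun R hR => ?_) (fun R hR => ?_) (hodd T (mem_insert_self T 𝓛))
      (hthree T (mem_insert_self T 𝓛))
    · rw [mem_filter] at hR
      exact ssubset_of_subset_of_ne hR.2
        fun h => hT𝓛 (h ▸ maximalSets_subset 𝓛 hR.1)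
    · exact hodd R (mem_insert_of_mem (maximalSets_subset 𝓛 (filter_subset _ _ hR)))
  have hT_notMem : T ∉ (maximalSets 𝓛).filter (¬ · ⊆ T) := by simp
  rw [maximalSets_insert_of_forall_card_le hTmax, sum_insert hT_notMem,
    card_insert_of_notMem hT_notMem, card_insert_of_notMem hT𝓛]
  have hsum := sum_filter_add_sum_filter_not (maximalSets 𝓛) (· ⊆ T) card
  have hcard := card_filter_add_card_filter_not (s := maximalSets 𝓛) (· ⊆ T)
  omega

theorem Finset.disjoint_sym2_of_disjoint {α : Type*} {s t : Finset α} (h : Disjoint s t) :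
    Disjoint s.sym2 t.sym2 :=
  disjoint_left.2 fun e hs ht => disjoint_left.1 h
    (mem_sym2_iff.1 hs _ (Sym2.out_fst_mem e)) (mem_sym2_iff.1 ht _ (Sym2.out_fst_mem e))

section Sums

variable {R : Type*}

theorem sum_sum_le_sum_of_pairwiseDisjoint [AddCommMonoid R] [PartialOrder R]
    [IsOrderedAddMonoid R] {ι β : Type*} [DecidableEq β] {s : Finset ι} {t : ι → Finset β}
    {E : Finset β} {f : β → R} (hdisj : (s : Set ι).PairwiseDisjoint t)
    (hsub : ∀ i ∈ s, t i ⊆ E) (hf : ∀ b ∈ E, 0 ≤ f b) :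
    ∑ i ∈ s, ∑ b ∈ t i, f b ≤ ∑ b ∈ E, f b := by
  rw [← sum_biUnion hdisj]
  exact sum_le_sum_of_subset_of_nonneg (biUnion_subset.2 hsub) fun b hb _ => hf b hb

theorem card_le_sum_of_one_le_sum_fiber [Semiring R] [PartialOrder R] [IsOrderedAddMonoid R]
    {ι β : Type*} [DecidableEq ι] [DecidableEq β] {E : Finset β} {f : β → R} {c : β → ι}
    {Q : Finset ι} (hf : ∀ b ∈ E, 0 ≤ f b) (hQ : ∀ j ∈ Q, 1 ≤ ∑ b ∈ E.filter (c · = j), f b) :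
    (Q.card : R) ≤ ∑ b ∈ E, f b :=
  calc (Q.card : R) = ∑ _j ∈ Q, 1 := by simp
    _ ≤ ∑ j ∈ Q, ∑ b ∈ E.filter (c · = j), f b := sum_le_sum hQ
    _ ≤ ∑ b ∈ E, f b := sum_sum_le_sum_of_pairwiseDisjoint
      (Set.pairwiseDisjoint_filter c _ E) (fun _ _ => filter_subset _ _) hf

end Sums

section Graph

variable {V R : Type*} [Fintype V] [DecidableEq V] (G : SimpleGraph V) [DecidableRel G.Adj]

theorem SimpleGraph.sum_sum_incident_eq_two_mul_sum [NonAssocSemiring R] (x : Sym2 V → R) :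
    ∑ v, ∑ e ∈ G.edgeFinset.filter (v ∈ ·), x e = 2 * ∑ e ∈ G.edgeFinset, x e := by
  simp_rw [sum_filter]
  rw [sum_comm, mul_sum]
  refine sum_congr rfl fun e he => ?_
  have hends : univ.filter (· ∈ e) = e.toFinset := by
    ext v
    simp
  rw [← sum_filter, hends, sum_const, Sym2.card_toFinset_of_not_isDiag e
    (G.not_isDiag_of_mem_edgeSet (G.mem_edgeFinset.1 he)), two_nsmul, two_mul]

theorem SimpleGraph.card_le_two_mul_sum_of_sum_incident_eq_one [Semiring R] [PartialOrder R]
    [IsOrderedAddMonoid R] {x : Sym2 V → R} {F : Finset V} (hx : ∀ e ∈ G.edgeFinset, 0 ≤ x e)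
    (hF : ∀ v ∈ F, ∑ e ∈ G.edgeFinset.filter (v ∈ ·), x e = 1) :
    (F.card : R) ≤ 2 * ∑ e ∈ G.edgeFinset, x e :=
  calc (F.card : R) = ∑ v ∈ F, ∑ e ∈ G.edgeFinset.filter (v ∈ ·), x e := by
        rw [sum_congr rfl hF]
        simp
    _ ≤ ∑ v, ∑ e ∈ G.edgeFinset.filter (v ∈ ·), x e :=
      sum_le_sum_of_subset_of_nonneg (subset_univ F) fun _ _ _ =>
        sum_nonneg fun e he => hx e (filter_subset _ _ he)
    _ = 2 * ∑ e ∈ G.edgeFinset, x e := G.sum_sum_incident_eq_two_mul_sum x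

end Graph

theorem Laminar.card_le_sum_of_sum_sym2_eq {α R : Type*} [DecidableEq α] [Field R]
    [LinearOrder R] [IsStrictOrderedRing R] {𝓛 : Finset (Finset α)} {E : Finset (Sym2 α)}
    {x : Sym2 α → R} (hl : Laminar 𝓛) (hodd : ∀ S ∈ 𝓛, Odd S.card)
    (hthree : ∀ S ∈ 𝓛, 3 ≤ S.card) (hx : ∀ e ∈ E, 0 ≤ x e)
    (htight : ∀ S ∈ 𝓛, ∑ e ∈ E ∩ S.sym2, x e = ((S.card : R) - 1) / 2) :
    (𝓛.card : R) ≤ ∑ e ∈ E, x e := by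
  have hcount : (2 * 𝓛.card + (maximalSets 𝓛).card : R) ≤ ∑ S ∈ maximalSets 𝓛, (S.card : R) := by
    exact_mod_cast hl.two_mul_card_add_card_maximalSets_le hodd hthree
  calc (𝓛.card : R) ≤ ∑ S ∈ maximalSets 𝓛, ((S.card : R) - 1) / 2 := by
        rw [← sum_div, sum_sub_distrib, sum_const, nsmul_one, le_div_iff₀ two_pos]
        linarith
    _ = ∑ S ∈ maximalSets 𝓛, ∑ e ∈ E ∩ S.sym2, x e :=
      sum_congr rfl fun S hS => (htight S (maximalSets_subset 𝓛 hS)).symm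
    _ ≤ ∑ e ∈ E, x e :=
      sum_sum_le_sum_of_pairwiseDisjoint
        (fun _ hS _ hT hne => (disjoint_sym2_of_disjoint
          (hl.pairwiseDisjoint_maximalSets hS hT hne)).mono inter_subset_right inter_subset_right)
        (fun _ _ => inter_subset_left) hx

theorem support_card_le_four_opt_general {V : Type*} [Fintype V] [DecidableEq V]
    (G : SimpleGraph V) [DecidableRel G.Adj]
    (k : ℕ) (c : Sym2 V → Fin k) (w : Fin k → ℕ) (hw : ∀ j, 1 ≤ w j)
    (x : Sym2 V → ℝ) (hx : ∀ e ∈ G.edgeFinset, 0 < x e ∧ x e ≤ 1)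
    (F : Finset V)
    (hF : ∀ v ∈ F, ∑ e ∈ G.edgeFinset.filter (fun e => v ∈ e), x e = 1)
    (𝓛 : Finset (Finset V)) (hlam : Laminar 𝓛)
    (hodd : ∀ S ∈ 𝓛, Odd S.card) (hthree : ∀ S ∈ 𝓛, 3 ≤ S.card)
    (h𝓛tight : ∀ S ∈ 𝓛, ∑ e ∈ G.edgeFinset ∩ S.sym2, x e = ((S.card : ℝ) - 1) / 2)
    (Q : Finset (Fin k))
    (hQtight : ∀ j ∈ Q, ∑ e ∈ G.edgeFinset.filter (fun e => c e = j), x e = (w j : ℝ))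
    (hcount : G.edgeFinset.card = F.card + 𝓛.card + Q.card) :
    (G.edgeFinset.card : ℝ) ≤ 4 * ∑ e ∈ G.edgeFinset, x e := by
  have hx₀ : ∀ e ∈ G.edgeFinset, 0 ≤ x e := fun e he => (hx e he).1.le
  have hF_le := G.card_le_two_mul_sum_of_sum_incident_eq_one hx₀ hF
  have h𝓛_le := hlam.card_le_sum_of_sum_sym2_eq hodd hthree hx₀ h𝓛tight
  have hQ_le : (Q.card : ℝ) ≤ ∑ e ∈ G.edgeFinset, x e :=
    card_le_sum_of_one_le_sum_fiber hx₀ fun j hj => by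
      rw [hQtight j hj]
      exact_mod_cast hw j
  have hcount_real : (G.edgeFinset.card : ℝ) = F.card + 𝓛.card + Q.card := by
    exact_mod_cast hcount
  linarith

/-- Support-size bound for basic feasible solutions (general graphs): if
`x : E → (0,1]` has degree sums at most 1, and there are a vertex set `F` of tight
vertices, a laminar family `𝓛` of tight odd-cardinality sets (each of size ≥ 3), and a
set `Q` of tight colors with `|E| = |F| + |𝓛| + |Q|`, then `|E| ≤ 4 · ∑_{e ∈ E} x_e`. -/
theorem support_card_le_four_opt {V : Type*} [Fintype V] [DecidableEq V]
    (G : SimpleGraph V) [DecidableRel G.Adj]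
    (k : ℕ) (c : Sym2 V → Fin k) (w : Fin k → ℕ) (hw : ∀ j, 1 ≤ w j)
    (x : Sym2 V → ℝ) (hx : ∀ e ∈ G.edgeFinset, 0 < x e ∧ x e ≤ 1)
    (hdeg : ∀ v : V, ∑ e ∈ G.edgeFinset.filter (fun e => v ∈ e), x e ≤ 1)
    (F : Finset V)
    (hF : ∀ v ∈ F, ∑ e ∈ G.edgeFinset.filter (fun e => v ∈ e), x e = 1)
    (𝓛 : Finset (Finset V)) (hlam : Laminar 𝓛)
    (hodd : ∀ S ∈ 𝓛, Odd S.card) (hthree : ∀ S ∈ 𝓛, 3 ≤ S.card)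
    (h𝓛tight : ∀ S ∈ 𝓛, ∑ e ∈ G.edgeFinset ∩ S.sym2, x e = ((S.card : ℝ) - 1) / 2)
    (Q : Finset (Fin k))
    (hQtight : ∀ j ∈ Q, ∑ e ∈ G.edgeFinset.filter (fun e => c e = j), x e = (w j : ℝ))
    (hcount : G.edgeFinset.card = F.card + 𝓛.card + Q.card) :
    (G.edgeFinset.card : ℝ) ≤ 4 * ∑ e ∈ G.edgeFinset, x e :=
  support_card_le_four_opt_general G k c w hw x hx F hF 𝓛 hlam hodd hthree h𝓛tight Q hQtight hcount
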